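/- arXiv:2202.04349 — 2 statements merged into one kernel-verified Lean document; each statement's English description precedes it below -/
import Mathlib

section
/- Let (v, i) be a pivot. If [ℓ, r] and [ℓ', r'] are both fixed-intervals with pivot (v, i), then [ℓ', r] is also a fixed-interval with pivot (v, i); in particular, the intersection [max(ℓ,ℓ'), min(r,r')] of two fixed-intervals with the same pivot is again a fixed-interval with that pivot. -/
/-- Ordered binary trees (possibly empty). -/
inductive BTree : Type
  | nil : BTree
  | node : BTree → BTree → BTree
  deriving DecidableEq

/-- The minimum value of a list of integers (with default `0` for the empty list). -/
noncomputable def minval (l : List ℤ) : ℤ := l.minimum.untopD 0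

/-- The 0-based index of the leftmost occurrence of the minimum value. -/
noncomputable def minidx0 (l : List ℤ) : ℕ := l.idxOf (minval l)

theorem minidx0_lt_length {l : List ℤ} (h : l ≠ []) : minidx0 l < l.length := by
  obtain ⟨a, ha⟩ := WithTop.ne_top_iff_exists.mp (List.minimum_ne_top_of_ne_nil h)
  have hmem : a ∈ l := List.minimum_mem ha.symm
  have hval : minval l = a := by simp [minval, ← ha]
  rw [minidx0, hval]
  exact List.idxOf_lt_length_iff.mpr hmem

/-- The Cartesian tree of a string of integers. -/
noncomputable def CT (l : List ℤ) : BTree :=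
  if h : l = [] then .nil
  else .node (CT (l.take (minidx0 l))) (CT (l.drop (minidx0 l + 1)))
termination_by l.length
decreasing_by
  · have := minidx0_lt_length h
    simp [List.length_take]
    omega
  · have : 0 < l.length := List.length_pos_iff.mpr h
    simp [List.length_drop]
    omega

/-- The value of the 1-based position `i` of the string `T` (default `0`). -/
def val (T : List ℤ) (i : ℕ) : ℤ := T.getD (i - 1) 0

/-- `IsSubSeq n m I` : `I` is a strictly increasing sequence of `m` subscripts in `[1, n]`. -/
def IsSubSeq (n m : ℕ) (I : List ℕ) : Prop :=
  I.length = m ∧ I.Pairwise (· < ·) ∧ ∀ j ∈ I, 1 ≤ j ∧ j ≤ n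

/-- The subsequence `T_I` of `T` selected by the (1-based) subscript sequence `I`. -/
def seqAt (T : List ℤ) (I : List ℕ) : List ℤ := I.map (val T)

/-- The substring `P[a..b]` of `P` (1-based, inclusive). -/
def subslice (P : List ℤ) (a b : ℕ) : List ℤ := (P.take b).drop (a - 1)

/-- The left end of the maximal interval around position `v` in which `P[v]` is minimal:
one plus the rightmost position `j < v` carrying a value smaller than `P[v]` (or `1`). -/
def leftEnd (P : List ℤ) (v : ℕ) : ℕ :=
  (((Finset.Icc 1 (v - 1)).filter (fun j => val P j < val P v)).max.unbotD 0) + 1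

/-- The right end of the maximal interval around position `v` in which `P[v]` is minimal:
the leftmost position `j > v` carrying a value smaller than `P[v]`, minus one (or `|P|`). -/
def rightEnd (P : List ℤ) (v : ℕ) : ℕ :=
  (((Finset.Icc (v + 1) P.length).filter (fun j => val P j < val P v)).min.untopD
    (P.length + 1)) - 1

/-- `P_v`: the substring of `P` spanned by the subtree of `CT(P)` rooted at node `v`
(nodes are identified with 1-based positions of `P`). -/
def Psub (P : List ℤ) (v : ℕ) : List ℤ := subslice P (leftEnd P v) (rightEnd P v)

/-- The left child `v.L` of node `v` in `CT(P)` (as a 1-based position), if it exists. -/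
noncomputable def leftChild (P : List ℤ) (v : ℕ) : Option ℕ :=
  if leftEnd P v < v then some (leftEnd P v + minidx0 (subslice P (leftEnd P v) (v - 1)))
  else none

/-- The right child `v.R` of node `v` in `CT(P)` (as a 1-based position), if it exists. -/
noncomputable def rightChild (P : List ℤ) (v : ℕ) : Option ℕ :=
  if v < rightEnd P v then some (v + 1 + minidx0 (subslice P (v + 1) (rightEnd P v)))
  else none

/-- `[ℓ, r]` is a fixed-interval with pivot `(v, i)`. -/
def IsFixedInterval (T P : List ℤ) (v i ℓ r : ℕ) : Prop :=
  1 ≤ ℓ ∧ r ≤ T.length ∧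
    ∃ I : List ℕ, IsSubSeq T.length (Psub P v).length I ∧ i ∈ I ∧
      (∀ j ∈ I, ℓ ≤ j ∧ j ≤ r) ∧ CT (seqAt T I) = CT (Psub P v) ∧
      val T i = minval (seqAt T I)

/-- `IntervalSsubset (ℓ', r') (ℓ, r)` : the interval `[ℓ', r']` is strictly contained
in the interval `[ℓ, r]`. -/
def IntervalSsubset (p q : ℕ × ℕ) : Prop := q.1 ≤ p.1 ∧ p.2 ≤ q.2 ∧ p ≠ q

/-- `[ℓ, r]` is a minimal fixed-interval with pivot `(v, i)`. -/
def IsMinFixedInterval (T P : List ℤ) (v i ℓ r : ℕ) : Prop :=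
  IsFixedInterval T P v i ℓ r ∧
    ¬∃ ℓ' r', IsFixedInterval T P v i ℓ' r' ∧ IntervalSsubset (ℓ', r') (ℓ, r)

open Classical in
/-- The left endpoint `L(v, i)` of the minimal fixed-interval `mfi(v, i)`,
which is `-∞` (i.e. `⊥`) if no (minimal) fixed-interval with pivot `(v, i)` exists. -/
noncomputable def mfiL (T P : List ℤ) (v i : ℕ) : WithBot ℕ :=
  if h : ∃ ℓ r, IsMinFixedInterval T P v i ℓ r then (h.choose : WithBot ℕ) else ⊥

open Classical in
/-- The right endpoint `R(v, i)` of the minimal fixed-interval `mfi(v, i)`,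
which is `∞` (i.e. `⊤`) if no (minimal) fixed-interval with pivot `(v, i)` exists. -/
noncomputable def mfiR (T P : List ℤ) (v i : ℕ) : WithTop ℕ :=
  if h : ∃ ℓ r, IsMinFixedInterval T P v i ℓ r then (h.choose_spec.choose : WithTop ℕ) else ⊤

/-- `I` is a trace of pattern `P` in text `T`. -/
def IsTrace (T P : List ℤ) (I : List ℕ) : Prop :=
  IsSubSeq T.length P.length I ∧ CT (seqAt T I) = CT P

/-- `[ℓ, r]` is an occurrence interval for `P` over `T`. -/
def IsOccInterval (T P : List ℤ) (ℓ r : ℕ) : Prop :=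
  1 ≤ ℓ ∧ r ≤ T.length ∧ ∃ I, IsTrace T P I ∧ ∀ j ∈ I, ℓ ≤ j ∧ j ≤ r

/-- `[ℓ, r]` is a minimal occurrence interval for `P` over `T`. -/
def IsMinOccInterval (T P : List ℤ) (ℓ r : ℕ) : Prop :=
  IsOccInterval T P ℓ r ∧
    ¬∃ ℓ' r', IsOccInterval T P ℓ' r' ∧ IntervalSsubset (ℓ', r') (ℓ, r)


/-!
Split a fixed-interval witness for the pivot `(v, i)` at `i` as `A ++ i :: B`. As `T[i]` is the
unique minimum of `T_I`, the Cartesian tree of `T_I` is the node with subtrees `CT(T_A)`, `CT(T_B)`.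
All witnesses have the tree `CT(P_v)`, so the left part `A'` of a witness in `[ℓ', r']` and the
right part `B` of a witness in `[ℓ, r]` splice to a witness `A' ++ i :: B`, which lies in `[ℓ', r]`.
The intersection of the two intervals is one of `[ℓ', r]`, `[ℓ, r']`, `[ℓ, r]`, `[ℓ', r']`.
-/

def BTree.size : BTree → ℕ
  | .nil => 0
  | .node a b => a.size + b.size + 1

theorem size_CT (l : List ℤ) : (CT l).size = l.length := by
  fun_induction CT l with
  | case1 => rfl
  | case2 l hl ihL ihR =>
    have := minidx0_lt_length hl
    simp only [BTree.size, ihL, ihR, List.length_take, List.length_drop]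
    omega

theorem length_eq_of_CT_eq {l₁ l₂ : List ℤ} (h : CT l₁ = CT l₂) : l₁.length = l₂.length := by
  rw [← size_CT, h, size_CT]

theorem minimum_eq_coe_minval {l : List ℤ} (hl : l ≠ []) : l.minimum = (minval l : WithTop ℤ) := by
  obtain ⟨m, hm⟩ := WithTop.ne_top_iff_exists.mp (List.minimum_ne_top_of_ne_nil hl)
  simp [minval, ← hm]

theorem minval_eq_iff {l : List ℤ} {a : ℤ} (h : a ∈ l) : minval l = a ↔ ∀ b ∈ l, a ≤ b := by
  rw [← WithTop.coe_inj, ← minimum_eq_coe_minval (List.ne_nil_of_mem h), List.minimum_eq_coe_iff]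
  exact and_iff_right h

theorem CT_append_cons {a b : List ℤ} {x : ℤ} (hnd : (a ++ x :: b).Nodup)
    (hmin : ∀ y ∈ a ++ x :: b, x ≤ y) : CT (a ++ x :: b) = .node (CT a) (CT b) := by
  have hx : minval (a ++ x :: b) = x := (minval_eq_iff (by simp)).mpr hmin
  have hxa : x ∉ a := fun hxa => List.disjoint_of_nodup_append hnd hxa List.mem_cons_self
  have hidx : minidx0 (a ++ x :: b) = a.length := by
    rw [minidx0, hx, List.idxOf_append_of_notMem hxa, List.idxOf_cons_self, add_zero]
  rw [CT, dif_neg (by simp), hidx]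
  simp

theorem pairwise_splice {α : Type*} {R : α → α → Prop} [IsTrans α R] {A B A' B' : List α} {x : α}
    (h : (A ++ x :: B).Pairwise R) (h' : (A' ++ x :: B').Pairwise R) :
    (A' ++ x :: B).Pairwise R := by
  rw [List.pairwise_append] at h h' ⊢
  refine ⟨h'.1, h.2.1, fun a ha b hb => ?_⟩
  have hax : R a x := h'.2.2 a ha x List.mem_cons_self
  rcases List.mem_cons.mp hb with rfl | hb
  · exact hax
  · exact _root_.trans hax (List.rel_of_pairwise_cons h.2.1 hb)

theorem mem_splice {α : Type*} [Preorder α] {A B A' B' : List α} {x y : α}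
    (h : (A ++ x :: B).Pairwise (· < ·)) (h' : (A' ++ x :: B').Pairwise (· < ·))
    (hy : y ∈ A' ++ x :: B) : (y ∈ A' ++ x :: B' ∧ y ≤ x) ∨ (y ∈ A ++ x :: B ∧ x ≤ y) := by
  rcases List.mem_append.mp hy with hy | hy
  · exact .inl ⟨List.mem_append_left _ hy,
      (List.pairwise_append.mp h').2.2 y hy x List.mem_cons_self |>.le⟩
  · refine .inr ⟨List.mem_append_right _ hy, ?_⟩
    rcases List.mem_cons.mp hy with rfl | hy
    · exact le_rfl
    · exact (List.rel_of_pairwise_cons (List.pairwise_append.mp h).2.1 hy).le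

section FixedInterval

variable {T P : List ℤ} {I A B : List ℕ} {v i ℓ r ℓ' r' : ℕ}

theorem seqAt_nodup (hT : T.Nodup) (hs : I.Pairwise (· < ·))
    (hb : ∀ j ∈ I, 1 ≤ j ∧ j ≤ T.length) : (seqAt T I).Nodup := by
  refine List.Nodup.map_on (fun x hx y hy hxy => ?_) hs.nodup
  obtain ⟨hx1, hx2⟩ := hb x hx
  obtain ⟨hy1, hy2⟩ := hb y hy
  simp only [val, List.getD_eq_getElem _ _ (show x - 1 < T.length by omega),
    List.getD_eq_getElem _ _ (show y - 1 < T.length by omega), hT.getElem_inj_iff] at hxy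
  omega

theorem CT_seqAt_append_cons (hT : T.Nodup)
    (hs : (A ++ i :: B).Pairwise (· < ·)) (hb : ∀ j ∈ A ++ i :: B, 1 ≤ j ∧ j ≤ T.length)
    (hmin : ∀ j ∈ A ++ i :: B, val T i ≤ val T j) :
    CT (seqAt T (A ++ i :: B)) = .node (CT (seqAt T A)) (CT (seqAt T B)) := by
  have hnd := seqAt_nodup hT hs hb
  simp only [seqAt, List.map_append, List.map_cons] at hnd ⊢
  refine CT_append_cons hnd fun y hy => ?_
  rw [← List.map_cons, ← List.map_append, List.mem_map] at hy
  obtain ⟨j, hj, rfl⟩ := hy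
  exact hmin j hj

theorem val_eq_minval_seqAt_iff (hi : i ∈ I) :
    val T i = minval (seqAt T I) ↔ ∀ j ∈ I, val T i ≤ val T j := by
  rw [eq_comm, seqAt, minval_eq_iff (List.mem_map_of_mem hi), List.forall_mem_map]

theorem IsFixedInterval.combine (hT : T.Nodup) (h₁ : IsFixedInterval T P v i ℓ r)
    (h₂ : IsFixedInterval T P v i ℓ' r') : IsFixedInterval T P v i ℓ' r := by
  obtain ⟨-, hr, I₁, ⟨-, hs₁, hb₁⟩, hi₁, hin₁, hCT₁, hmin₁⟩ := h₁
  obtain ⟨hℓ', -, I₂, ⟨-, hs₂, hb₂⟩, hi₂, hin₂, hCT₂, hmin₂⟩ := h₂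
  rw [val_eq_minval_seqAt_iff hi₁] at hmin₁
  rw [val_eq_minval_seqAt_iff hi₂] at hmin₂
  have hir := (hin₁ i hi₁).2
  have hℓ'i := (hin₂ i hi₂).1
  obtain ⟨A₁, B₁, rfl⟩ := List.append_of_mem hi₁
  obtain ⟨A₂, B₂, rfl⟩ := List.append_of_mem hi₂
  have hleft : CT (seqAt T A₂) = CT (seqAt T A₁) := by
    have h := hCT₂.trans hCT₁.symm
    rw [CT_seqAt_append_cons hT hs₁ hb₁ hmin₁, CT_seqAt_append_cons hT hs₂ hb₂ hmin₂] at h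
    exact (BTree.node.inj h).1
  have hsJ := pairwise_splice hs₁ hs₂
  have hJ : ∀ j ∈ A₂ ++ i :: B₁, (1 ≤ j ∧ j ≤ T.length) ∧ val T i ≤ val T j ∧ ℓ' ≤ j ∧ j ≤ r := by
    intro j hj
    rcases mem_splice hs₁ hs₂ hj with ⟨hj, hji⟩ | ⟨hj, hij⟩
    · exact ⟨hb₂ j hj, hmin₂ j hj, (hin₂ j hj).1, by omega⟩
    · exact ⟨hb₁ j hj, hmin₁ j hj, by omega, (hin₁ j hj).2⟩
  have hbJ := fun j hj => (hJ j hj).1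
  have hminJ := fun j hj => (hJ j hj).2.1
  have hCTJ : CT (seqAt T (A₂ ++ i :: B₁)) = CT (Psub P v) := by
    rw [CT_seqAt_append_cons hT hsJ hbJ hminJ, hleft, ← CT_seqAt_append_cons hT hs₁ hb₁ hmin₁, hCT₁]
  have hiJ : i ∈ A₂ ++ i :: B₁ := by simp
  refine ⟨hℓ', hr, A₂ ++ i :: B₁, ⟨?_, hsJ, hbJ⟩, hiJ, fun j hj => (hJ j hj).2.2, hCTJ,
    (val_eq_minval_seqAt_iff hiJ).mpr hminJ⟩
  simpa only [seqAt, List.length_map] using length_eq_of_CT_eq hCTJ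

end FixedInterval

theorem fixed_interval_combine_general
    (T P : List ℤ) (hT : T.Nodup)
    (v i : ℕ)
    (ℓ r ℓ' r' : ℕ)
    (h1 : IsFixedInterval T P v i ℓ r) (h2 : IsFixedInterval T P v i ℓ' r') :
    IsFixedInterval T P v i ℓ' r ∧
      IsFixedInterval T P v i (max ℓ ℓ') (min r r') := by
  refine ⟨h1.combine hT h2, ?_⟩
  rcases le_total ℓ ℓ' with hℓ | hℓ <;> rcases le_total r r' with hr | hr
  · rw [max_eq_right hℓ, min_eq_left hr]
    exact h1.combine hT h2
  · rw [max_eq_right hℓ, min_eq_right hr]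
    exact h2
  · rw [max_eq_left hℓ, min_eq_left hr]
    exact h1
  · rw [max_eq_left hℓ, min_eq_right hr]
    exact h2.combine hT h1

/-- If `[ℓ, r]` and `[ℓ', r']` are both fixed-intervals with pivot `(v, i)`,
then `[ℓ', r]` is also a fixed-interval with pivot `(v, i)`; in particular, the intersection
`[max(ℓ,ℓ'), min(r,r')]` of two fixed-intervals with the same pivot is again a fixed-interval
with that pivot. -/
theorem fixed_interval_combine
    (T P : List ℤ) (hT : T.Nodup) (hP : P.Nodup)
    (hm : 1 ≤ P.length) (hmn : P.length ≤ T.length)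
    (v i : ℕ) (hv : 1 ≤ v ∧ v ≤ P.length) (hi : 1 ≤ i ∧ i ≤ T.length)
    (ℓ r ℓ' r' : ℕ)
    (h1 : IsFixedInterval T P v i ℓ r) (h2 : IsFixedInterval T P v i ℓ' r') :
    IsFixedInterval T P v i ℓ' r ∧
      IsFixedInterval T P v i (max ℓ ℓ') (min r r') :=
  fixed_interval_combine_general T P hT v i ℓ r ℓ' r' h1 h2
end

section
/- Let 𝓜 = { mfi(minidx(P), i) : i ∈ [1,n] }. If [ℓ, r] ∈ 𝓜 with [ℓ, r] ≠ [-∞,∞], and there is no interval [ℓ', r'] ∈ 𝓜 with [ℓ', r'] ⊊ [ℓ, r], then [ℓ, r] is a minimal occurrence interval for P over T. -/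
/-! Pinning the pivot at the root `minidx(P)` of `CT(P)` makes `P_v = P`, so a fixed-interval
with pivot `(minidx(P), i)` is exactly an occurrence interval whose trace has its minimum at `i`.
Hence every occurrence interval inside `[ℓ, r]` contains a fixed-interval with a root pivot, and
thereby a minimal one, i.e. a member of `𝓜`; minimality of `[ℓ, r]` in `𝓜` then rules out a
strictly smaller occurrence interval. -/

lemma minval_eq_minimum_of_length_pos {l : List ℤ} (h : 0 < l.length) :
    minval l = l.minimum_of_length_pos h := by
  rw [minval, ← List.coe_minimum_of_length_pos h, WithTop.untopD_coe]

lemma minval_mem {l : List ℤ} (h : l ≠ []) : minval l ∈ l := by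
  rw [minval_eq_minimum_of_length_pos (List.length_pos_iff.mpr h)]
  exact List.minimum_of_length_pos_mem _

lemma minval_le_of_mem {l : List ℤ} {x : ℤ} (hx : x ∈ l) : minval l ≤ x := by
  have hpos : 0 < l.length := List.length_pos_of_mem hx
  have hle := List.minimum_le_of_mem' hx
  rw [← List.coe_minimum_of_length_pos hpos] at hle
  rw [minval_eq_minimum_of_length_pos hpos]
  exact_mod_cast hle

lemma minval_le_val {P : List ℤ} {j : ℕ} (hj : 1 ≤ j) (hjP : j ≤ P.length) :
    minval P ≤ val P j := by
  have hlt : j - 1 < P.length := by omega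
  rw [val, List.getD_eq_getElem _ _ hlt]
  exact minval_le_of_mem (List.getElem_mem hlt)

lemma val_minidx0_succ {P : List ℤ} (hP : P ≠ []) : val P (minidx0 P + 1) = minval P := by
  rw [val, Nat.add_sub_cancel, List.getD_eq_getElem _ _ (minidx0_lt_length hP)]
  exact List.getElem_idxOf (List.idxOf_lt_length_iff.mpr (minval_mem hP))

lemma leftEnd_minidx0_succ {P : List ℤ} (hP : P ≠ []) : leftEnd P (minidx0 P + 1) = 1 := by
  have hlt := minidx0_lt_length hP
  have hempty : (Finset.Icc 1 (minidx0 P)).filter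
      (fun j => val P j < val P (minidx0 P + 1)) = ∅ := by
    rw [Finset.filter_eq_empty_iff, val_minidx0_succ hP]
    intro j hj
    rw [Finset.mem_Icc] at hj
    exact not_lt.mpr (minval_le_val hj.1 (by omega))
  simp [leftEnd, hempty]

lemma rightEnd_minidx0_succ {P : List ℤ} (hP : P ≠ []) :
    rightEnd P (minidx0 P + 1) = P.length := by
  have hempty : (Finset.Icc (minidx0 P + 1 + 1) P.length).filter
      (fun j => val P j < val P (minidx0 P + 1)) = ∅ := by
    rw [Finset.filter_eq_empty_iff, val_minidx0_succ hP]
    intro j hj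
    rw [Finset.mem_Icc] at hj
    exact not_lt.mpr (minval_le_val (by omega) hj.2)
  simp [rightEnd, hempty]

lemma Psub_minidx0_succ {P : List ℤ} (hP : P ≠ []) : Psub P (minidx0 P + 1) = P := by
  simp [Psub, subslice, leftEnd_minidx0_succ hP, rightEnd_minidx0_succ hP]

lemma IsFixedInterval.isOccInterval {T P : List ℤ} (hP : P ≠ []) {i ℓ r : ℕ}
    (h : IsFixedInterval T P (minidx0 P + 1) i ℓ r) : IsOccInterval T P ℓ r := by
  obtain ⟨hℓ, hr, I, hsub, -, hI, hct, -⟩ := h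
  rw [Psub_minidx0_succ hP] at hsub hct
  exact ⟨hℓ, hr, I, ⟨hsub, hct⟩, hI⟩

lemma IsOccInterval.exists_isFixedInterval {T P : List ℤ} (hP : P ≠ []) {ℓ r : ℕ}
    (h : IsOccInterval T P ℓ r) :
    ∃ i, 1 ≤ i ∧ i ≤ T.length ∧ IsFixedInterval T P (minidx0 P + 1) i ℓ r := by
  obtain ⟨hℓ, hr, I, ⟨hsub, hct⟩, hI⟩ := h
  have hne : seqAt T I ≠ [] := by
    rw [seqAt, ← List.length_pos_iff, List.length_map, hsub.1]
    exact List.length_pos_iff.mpr hP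
  obtain ⟨i, hiI, hval⟩ := List.mem_map.mp (minval_mem hne)
  refine ⟨i, (hsub.2.2 i hiI).1, (hsub.2.2 i hiI).2, hℓ, hr, I, ?_, hiI, hI, ?_, hval⟩
  · rwa [Psub_minidx0_succ hP]
  · rwa [Psub_minidx0_succ hP]

lemma IsFixedInterval.le_pivot_le {T P : List ℤ} {v i ℓ r : ℕ}
    (h : IsFixedInterval T P v i ℓ r) : ℓ ≤ i ∧ i ≤ r := by
  obtain ⟨-, -, I, -, hiI, hI, -⟩ := h
  exact hI i hiI

lemma IntervalSsubset.sub_lt {p q : ℕ × ℕ} (hp : p.1 ≤ p.2) (h : IntervalSsubset p q) :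
    p.2 - p.1 < q.2 - q.1 := by
  obtain ⟨h₁, h₂, hne⟩ := h
  have : p.1 ≠ q.1 ∨ p.2 ≠ q.2 := by
    by_contra! hc
    exact hne (Prod.ext hc.1 hc.2)
  omega

lemma IntervalSsubset.of_le_of_le {p q : ℕ × ℕ} {a b : ℕ} (h : IntervalSsubset (a, b) q)
    (ha : a ≤ p.1) (hb : p.2 ≤ b) : IntervalSsubset p q := by
  obtain ⟨h₁, h₂, hne⟩ := h
  refine ⟨by omega, by omega, fun hpq => hne ?_⟩
  subst hpq
  exact Prod.ext (by omega) (by omega)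

/-- Among the fixed-intervals inside `[a, b]` one of least width is a minimal fixed-interval. -/
lemma IsFixedInterval.exists_isMinFixedInterval {T P : List ℤ} {v i a b : ℕ}
    (h : IsFixedInterval T P v i a b) :
    ∃ ℓ r, IsMinFixedInterval T P v i ℓ r ∧ a ≤ ℓ ∧ r ≤ b := by
  set S : Set (ℕ × ℕ) := {p | IsFixedInterval T P v i p.1 p.2 ∧ a ≤ p.1 ∧ p.2 ≤ b}
  have hwf := (measure fun p : ℕ × ℕ => p.2 - p.1).wf
  have hS : S.Nonempty := ⟨(a, b), h, le_rfl, le_rfl⟩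
  obtain ⟨hfix, ha, hb⟩ : hwf.min S hS ∈ S := hwf.min_mem S hS
  refine ⟨_, _, ⟨hfix, ?_⟩, ha, hb⟩
  rintro ⟨ℓ', r', hfix', hss⟩
  have hpiv := hfix'.le_pivot_le
  exact hwf.not_lt_min S ⟨hfix', ha.trans hss.1, hss.2.1.trans hb⟩
    (hss.sub_lt (hpiv.1.trans hpiv.2))

theorem mem_M_minimal_is_minimal_occurrence_general
    (T P : List ℤ)
    (hm : 1 ≤ P.length)
    (ℓ r i : ℕ)
    (h : IsMinFixedInterval T P (minidx0 P + 1) i ℓ r)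
    (hmin : ¬∃ i' ℓ' r', 1 ≤ i' ∧ i' ≤ T.length ∧
        IsMinFixedInterval T P (minidx0 P + 1) i' ℓ' r' ∧
        IntervalSsubset (ℓ', r') (ℓ, r)) :
    IsMinOccInterval T P ℓ r := by
  have hP : P ≠ [] := List.ne_nil_of_length_pos hm
  refine ⟨h.1.isOccInterval hP, ?_⟩
  rintro ⟨ℓ', r', hocc, hss⟩
  obtain ⟨i', hi'₁, hi'₂, hfix⟩ := hocc.exists_isFixedInterval hP
  obtain ⟨ℓ₀, r₀, hmin₀, hℓ₀, hr₀⟩ := hfix.exists_isMinFixedInterval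
  exact hmin ⟨i', ℓ₀, r₀, hi'₁, hi'₂, hmin₀, hss.of_le_of_le hℓ₀ hr₀⟩

/-- If `[ℓ, r] ∈ 𝓜 = { mfi(minidx(P), i) : i ∈ [1,n] }` with
`[ℓ, r] ≠ [-∞,∞]`, and there is no interval `[ℓ', r'] ∈ 𝓜` with `[ℓ', r'] ⊊ [ℓ, r]`, then
`[ℓ, r]` is a minimal occurrence interval for `P` over `T`. -/
theorem mem_M_minimal_is_minimal_occurrence
    (T P : List ℤ) (hT : T.Nodup) (hP : P.Nodup)
    (hm : 1 ≤ P.length) (hmn : P.length ≤ T.length)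
    (ℓ r i : ℕ) (hi : 1 ≤ i ∧ i ≤ T.length)
    (h : IsMinFixedInterval T P (minidx0 P + 1) i ℓ r)
    (hmin : ¬∃ i' ℓ' r', 1 ≤ i' ∧ i' ≤ T.length ∧
        IsMinFixedInterval T P (minidx0 P + 1) i' ℓ' r' ∧
        IntervalSsubset (ℓ', r') (ℓ, r)) :
    IsMinOccInterval T P ℓ r :=
  mem_M_minimal_is_minimal_occurrence_general T P hm ℓ r i h hmin
end
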